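/- arXiv:2011.11328 — 3 statements merged into one kernel-verified Lean document; each statement's English description precedes it below -/
import Mathlib

section
/- For any connected dominating set S of the n × m grid with m, n ≥ 4 and no corner vertex in S, letting l be the number of leaves of G[S], one has ℓ(S) + e(S) ≥ 2|S| + 2l − 2. -/
open Finset

/-- The infinite grid graph on `ℤ × ℤ`: two points are adjacent iff their
Manhattan distance is `1`. -/
def GridZ : SimpleGraph (ℤ × ℤ) where
  Adj u v := |u.1 - v.1| + |u.2 - v.2| = 1
  symm := by
    constructor
    intro u v h
    rw [abs_sub_comm v.1 u.1, abs_sub_comm v.2 u.2]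
    exact h
  loopless := by
    constructor
    intro u h
    simp at h

/-- The vertex set `[1,n] × [1,m]` of the `n × m` grid graph `G_{n,m}`. -/
def box (n m : ℕ) : Set (ℤ × ℤ) :=
  {p | 1 ≤ p.1 ∧ p.1 ≤ (n : ℤ) ∧ 1 ≤ p.2 ∧ p.2 ≤ (m : ℤ)}

instance (n m : ℕ) (p : ℤ × ℤ) : Decidable (p ∈ box n m) :=
  inferInstanceAs (Decidable (1 ≤ p.1 ∧ p.1 ≤ (n : ℤ) ∧ 1 ≤ p.2 ∧ p.2 ≤ (m : ℤ)))

/-- `S` is a connected dominating set of the grid `G_{n,m}`: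
`S ⊆ [1,n] × [1,m]`, the induced subgraph on `S` is connected, and every
vertex of the grid is in `S` or adjacent to a vertex of `S`. -/
def IsCDS (n m : ℕ) (S : Finset (ℤ × ℤ)) : Prop :=
  (S : Set (ℤ × ℤ)) ⊆ box n m ∧
    (GridZ.induce (S : Set (ℤ × ℤ))).Connected ∧
    ∀ v ∈ box n m, ∃ u ∈ S, u = v ∨ GridZ.Adj u v

/-- The closed neighbourhood of a vertex in the (enlarged) grid. -/
def closedNbr (v : ℤ × ℤ) : Finset (ℤ × ℤ) :=
  {v, (v.1 + 1, v.2), (v.1 - 1, v.2), (v.1, v.2 + 1), (v.1, v.2 - 1)}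

/-- The closed neighbourhood `N_{G'}[S]` of `S` in the enlarged grid `G'`. -/
def closedN (S : Finset (ℤ × ℤ)) : Finset (ℤ × ℤ) :=
  S.biUnion closedNbr

/-- The loss function `ℓ(S) = Σ_{v ∈ N_{G'}[S]} (|N_{G'}[v] ∩ S| - 1)`. -/
def loss (S : Finset (ℤ × ℤ)) : ℕ :=
  ∑ v ∈ closedN S, ((closedNbr v ∩ S).card - 1)

/-- The boundary of `G_{n,m}`: vertices of the grid with degree at most 3. -/
def boundary (n m : ℕ) : Set (ℤ × ℤ) :=
  {p | p ∈ box n m ∧ (((closedNbr p).erase p).filter (· ∈ box n m)).card ≤ 3}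

instance (n m : ℕ) (p : ℤ × ℤ) : Decidable (p ∈ boundary n m) :=
  inferInstanceAs
    (Decidable (p ∈ box n m ∧ (((closedNbr p).erase p).filter (· ∈ box n m)).card ≤ 3))

/-- The excess `e(S)`: the number of points of `S` on the boundary of the grid. -/
def excess (n m : ℕ) (S : Finset (ℤ × ℤ)) : ℕ :=
  (S.filter (fun p => p ∈ boundary n m)).card

/-- The four corners of `G_{n,m}`. -/
def corners (n m : ℕ) : Set (ℤ × ℤ) :=
  {((1 : ℤ), (1 : ℤ)), ((1 : ℤ), (m : ℤ)), ((n : ℤ), (1 : ℤ)), ((n : ℤ), (m : ℤ))}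

/-- The degree of a vertex `v` in the induced subgraph `G[S]`. -/
def degS (S : Finset (ℤ × ℤ)) (v : ℤ × ℤ) : ℕ :=
  (((closedNbr v).erase v) ∩ S).card

/-- The number of leaves (degree-1 vertices) of `G[S]`. -/
def numLeaves (S : Finset (ℤ × ℤ)) : ℕ := (S.filter (fun v => degS S v = 1)).card

/-- The number of degree-3 vertices of `G[S]`. -/
def numDeg3 (S : Finset (ℤ × ℤ)) : ℕ := (S.filter (fun v => degS S v = 3)).card

/-- The number of degree-4 vertices of `G[S]`. -/
def numDeg4 (S : Finset (ℤ × ℤ)) : ℕ := (S.filter (fun v => degS S v = 4)).card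

/-- A bend: a degree-2 vertex of `G[S]` having one vertical and one horizontal
neighbour in `S`. -/
def IsBend (S : Finset (ℤ × ℤ)) (v : ℤ × ℤ) : Prop :=
  degS S v = 2 ∧ ((v.1 + 1, v.2) ∈ S ∨ (v.1 - 1, v.2) ∈ S) ∧
    ((v.1, v.2 + 1) ∈ S ∨ (v.1, v.2 - 1) ∈ S)

instance (S : Finset (ℤ × ℤ)) (v : ℤ × ℤ) : Decidable (IsBend S v) :=
  inferInstanceAs (Decidable (_ ∧ _ ∧ _))

/-- The number of bends of `G[S]`. -/
def numBends (S : Finset (ℤ × ℤ)) : ℕ := (S.filter (fun v => IsBend S v)).card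

/-- The connected domination number `γ_c(G_{n,m})`. -/
noncomputable def connDomNum (n m : ℕ) : ℕ :=
  sInf {k | ∃ S : Finset (ℤ × ℤ), IsCDS n m S ∧ S.card = k}

/-- A maximal horizontal line segment of `G[S]`: the vertices `(i,a),…,(i,b)`
all lie in `S`, and the segment cannot be extended in row `i`. -/
def IsMaxHSeg (S : Finset (ℤ × ℤ)) (i a b : ℤ) : Prop :=
  a ≤ b ∧ (∀ j, a ≤ j → j ≤ b → (i, j) ∈ S) ∧ (i, a - 1) ∉ S ∧ (i, b + 1) ∉ S

/-- A maximal vertical line segment of `G[S]`: the vertices `(a,j),…,(b,j)`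
all lie in `S`, and the segment cannot be extended in column `j`. -/
def IsMaxVSeg (S : Finset (ℤ × ℤ)) (j a b : ℤ) : Prop :=
  a ≤ b ∧ (∀ i, a ≤ i → i ≤ b → (i, j) ∈ S) ∧ (a - 1, j) ∉ S ∧ (b + 1, j) ∉ S

/-!
Write `ℓ(S) = 5|S| - |N[S]|` and let `b` be the number of bends of `G[S]`. For every finite
connected `S ⊆ ℤ²` one has `2|S| + 2l + b ≤ ℓ(S) + 6`, by induction on `|S|`: remove a leaf
if there is one, and otherwise a vertex whose removal keeps `S` connected. The closed
neighbourhood of the removed vertex `v` meets `N[S \ {v}]` in `v`, its neighbours in `S` and,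
when `v` is a leaf at `u`, in the cells next to `v` that are also next to a neighbour of `u`
perpendicular to `uv`; this pays for the change of `2|S| + 2l + b`. Counting bends is what makes
the leaf case work when `u` has degree 3.

No corner lies in `S`, so each corner is dominated by a vertex of `S` next to it; these lie on
the boundary and are distinct when `n, m ≥ 4`, so `e(S) ≥ 4`.
-/

lemma Finset.card_filter_add_ite_eq {α : Type*} [DecidableEq α] {s : Finset α} {u v : α}
    (hu : u ∈ s) (hv : v ∈ s) (huv : u ≠ v) {P Q : α → Prop} [DecidablePred P] [DecidablePred Q]
    (hPQ : ∀ x ∈ s, x ≠ u → x ≠ v → (P x ↔ Q x)) :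
    #{x ∈ s | P x} + (if Q u then 1 else 0) =
      #{x ∈ s.erase v | Q x} + (if P u then 1 else 0) + (if P v then 1 else 0) := by
  have hu' : u ∈ s.erase v := mem_erase.2 ⟨huv, hu⟩
  rw [card_filter, card_filter, ← add_sum_erase s _ hv,
    ← add_sum_erase _ _ hu', ← add_sum_erase _ (fun x => if Q x then 1 else 0) hu',
    sum_congr rfl fun x hx => if_congr (hPQ x (mem_of_mem_erase
      (mem_of_mem_erase hx)) (ne_of_mem_erase hx)
      (ne_of_mem_erase (mem_of_mem_erase hx))) rfl rfl]
  ring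

lemma SimpleGraph.Connected.induce_diff_singleton {V : Type*} {G : SimpleGraph V} {s : Set V}
    {v : V} (hv : v ∈ s) (h : ((G.induce s).induce {⟨v, hv⟩}ᶜ).Connected) :
    (G.induce (s \ {v})).Connected :=
  h.map ⟨fun w => ⟨w.1.1, w.1.2, fun hw => w.2 (Subtype.ext hw)⟩, id⟩
    fun w => ⟨⟨⟨w.1, w.2.1⟩, fun h => w.2.2 (congrArg Subtype.val h)⟩, rfl⟩

def openNbr (v : ℤ × ℤ) : Finset (ℤ × ℤ) := (closedNbr v).erase v

def unitVecs : Finset (ℤ × ℤ) := {(1, 0), (-1, 0), (0, 1), (0, -1)}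

lemma swap_mem_unitVecs {d : ℤ × ℤ} (hd : d ∈ unitVecs) : d.swap ∈ unitVecs := by
  fin_cases hd <;> decide

lemma openNbr_eq {d : ℤ × ℤ} (hd : d ∈ unitVecs) (x : ℤ × ℤ) :
    openNbr x = {x + d, x - d, x + d.swap, x - d.swap} := by
  fin_cases hd <;> ext ⟨a, b⟩ <;> simp [openNbr, closedNbr, Prod.ext_iff] <;> omega

lemma mem_closedNbr_self (v : ℤ × ℤ) : v ∈ closedNbr v := by simp [closedNbr]

lemma gridZ_adj_iff {u w : ℤ × ℤ} : GridZ.Adj u w ↔ w ∈ openNbr u := by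
  rw [openNbr_eq (d := (1, 0)) (by decide)]
  change |u.1 - w.1| + |u.2 - w.2| = 1 ↔ _
  simp only [mem_insert, mem_singleton, Prod.ext_iff]
  rcases abs_cases (u.1 - w.1) with ⟨h1, h2⟩ | ⟨h1, h2⟩ <;>
    rcases abs_cases (u.2 - w.2) with ⟨h3, h4⟩ | ⟨h3, h4⟩ <;> simp <;> omega

lemma gridZ_adj_cases {u w : ℤ × ℤ} (h : GridZ.Adj u w) :
    (u.1 = w.1 ∧ (w.2 = u.2 + 1 ∨ w.2 = u.2 - 1)) ∨
      (u.2 = w.2 ∧ (w.1 = u.1 + 1 ∨ w.1 = u.1 - 1)) := by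
  rw [gridZ_adj_iff, openNbr_eq (d := (1, 0)) (by decide)] at h
  simp [Prod.ext_iff] at h
  omega

lemma mem_openNbr_comm {u w : ℤ × ℤ} : w ∈ openNbr u ↔ u ∈ openNbr w := by
  rw [← gridZ_adj_iff, ← gridZ_adj_iff, GridZ.adj_comm]

lemma mem_closedNbr_iff {u w : ℤ × ℤ} : w ∈ closedNbr u ↔ w = u ∨ w ∈ openNbr u := by
  rw [openNbr, mem_erase]
  by_cases h : w = u <;> simp [h, closedNbr]

lemma mem_closedNbr_comm {u w : ℤ × ℤ} : w ∈ closedNbr u ↔ u ∈ closedNbr w := by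
  rw [mem_closedNbr_iff, mem_closedNbr_iff, mem_openNbr_comm, eq_comm]

lemma card_closedNbr (v : ℤ × ℤ) : (closedNbr v).card = 5 := by
  rw [closedNbr]
  repeat rw [card_insert_of_notMem (by simp [Prod.ext_iff] <;> omega)]
  rfl

lemma exists_unitVecs_of_mem_openNbr {u w : ℤ × ℤ} (h : w ∈ openNbr u) :
    ∃ d ∈ unitVecs, w = u + d := by
  refine ⟨w - u, ?_, by abel⟩
  rw [openNbr_eq (d := (1, 0)) (by decide)] at h
  simp only [mem_insert, mem_singleton] at h
  rcases h with rfl | rfl | rfl | rfl <;> simp [unitVecs]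

section

variable {S : Finset (ℤ × ℤ)}

lemma mem_closedN {w : ℤ × ℤ} : w ∈ closedN S ↔ ∃ u ∈ S, w ∈ closedNbr u :=
  mem_biUnion

lemma loss_add_card_closedN (S : Finset (ℤ × ℤ)) : loss S + #(closedN S) = 5 * #S := by
  have hpos : ∀ w ∈ closedN S, 1 ≤ #(closedNbr w ∩ S) := fun w hw => by
    obtain ⟨u, hu, hwu⟩ := mem_closedN.1 hw
    exact card_pos.2 ⟨u, mem_inter.2 ⟨mem_closedNbr_comm.1 hwu, hu⟩⟩
  have hbelow : ∀ u ∈ S, (closedN S).bipartiteBelow (fun w u => u ∈ closedNbr w) u =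
      closedNbr u := fun u hu => by
    ext w
    rw [mem_bipartiteBelow, mem_closedNbr_comm, and_iff_right_iff_imp]
    exact fun hw => mem_closedN.2 ⟨u, hu, hw⟩
  have hcount : ∑ w ∈ closedN S, #(closedNbr w ∩ S) = 5 * #S := calc
    _ = ∑ w ∈ closedN S, #(S.bipartiteAbove (fun w u => u ∈ closedNbr w) w) := by
      simp only [bipartiteAbove, filter_mem_eq_inter, inter_comm]
    _ = ∑ u ∈ S, #(closedNbr u) := by
      rw [sum_card_bipartiteAbove_eq_sum_card_bipartiteBelow]
      exact sum_congr rfl fun u hu => by rw [hbelow u hu]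
    _ = 5 * #S := by simp [card_closedNbr, mul_comm]
  rw [loss, card_eq_sum_ones, ← sum_add_distrib, ← hcount]
  exact sum_congr rfl fun w hw => Nat.sub_add_cancel (hpos w hw)

lemma loss_erase_add_card_le {T : Finset (ℤ × ℤ)} {v : ℤ × ℤ} (hv : v ∈ S)
    (hT : T ⊆ closedNbr v) (hT' : T ⊆ closedN (S.erase v)) :
    loss (S.erase v) + #T ≤ loss S := by
  have hcover : closedN S ⊆ closedN (S.erase v) ∪ (closedNbr v \ T) := fun w hw => by
    obtain ⟨u, hu, hwu⟩ := mem_closedN.1 hw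
    by_cases huv : u = v
    · subst huv
      by_cases hwT : w ∈ T
      · exact mem_union_left _ (hT' hwT)
      · exact mem_union_right _ (mem_sdiff.2 ⟨hwu, hwT⟩)
    · exact mem_union_left _ (mem_closedN.2 ⟨u, mem_erase.2 ⟨huv, hu⟩, hwu⟩)
  have hle := (card_le_card hcover).trans (card_union_le _ _)
  rw [card_sdiff_of_subset hT, card_closedNbr] at hle
  have hT5 : #T ≤ 5 := card_closedNbr v ▸ card_le_card hT
  have := loss_add_card_closedN S
  have := loss_add_card_closedN (S.erase v)
  have := card_erase_add_one hv
  omega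

lemma degS_eq_card_openNbr_inter (S : Finset (ℤ × ℤ)) (x : ℤ × ℤ) :
    degS S x = #(openNbr x ∩ S) := rfl

lemma loss_erase_add_degS_le {v : ℤ × ℤ} (hv : v ∈ S) (hdeg : 0 < degS S v) :
    loss (S.erase v) + 1 + degS S v ≤ loss S := by
  obtain ⟨u, hu⟩ := card_pos.1 hdeg
  have hT := loss_erase_add_card_le (T := insert v (openNbr v ∩ S)) hv
    (insert_subset (mem_closedNbr_self v)
      (inter_subset_left.trans (erase_subset _ _)))
    (insert_subset ?_ fun w hw => ?_)
  · rw [card_insert_of_notMem fun h => by simp [openNbr] at h] at hT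
    rw [degS_eq_card_openNbr_inter]
    omega
  · rw [mem_inter, mem_erase] at hu
    exact mem_closedN.2 ⟨u, mem_erase.2 ⟨hu.1.1, hu.2⟩, mem_closedNbr_comm.1 hu.1.2⟩
  · rw [mem_inter, openNbr, mem_erase] at hw
    exact mem_closedN.2 ⟨w, mem_erase.2 ⟨hw.1.1, hw.2⟩, mem_closedNbr_self w⟩

def axisDeg (S : Finset (ℤ × ℤ)) (x d : ℤ × ℤ) : ℕ := #({x + d, x - d} ∩ S)

lemma axisDeg_le_two (S : Finset (ℤ × ℤ)) (x d : ℤ × ℤ) : axisDeg S x d ≤ 2 :=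
  (card_le_card inter_subset_left).trans card_le_two

lemma axisDeg_neg (S : Finset (ℤ × ℤ)) (x d : ℤ × ℤ) : axisDeg S x (-d) = axisDeg S x d := by
  rw [axisDeg, axisDeg, sub_neg_eq_add, ← sub_eq_add_neg, pair_comm]

lemma axisDeg_pos_iff {x d : ℤ × ℤ} :
    0 < axisDeg S x d ↔ x + d ∈ S ∨ x - d ∈ S := by
  simp [axisDeg, card_pos, Finset.Nonempty]

lemma degS_eq_axisDeg_add {d : ℤ × ℤ} (hd : d ∈ unitVecs) (S : Finset (ℤ × ℤ)) (x : ℤ × ℤ) :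
    degS S x = axisDeg S x d + axisDeg S x d.swap := by
  have hdisj : Disjoint ({x + d, x - d} : Finset (ℤ × ℤ)) {x + d.swap, x - d.swap} := by
    fin_cases hd <;> simp [Prod.ext_iff]
  rw [axisDeg, axisDeg, ← card_union_of_disjoint
    (hdisj.mono inter_subset_left inter_subset_left),
    ← union_inter_distrib_right, insert_union, singleton_union]
  rw [degS_eq_card_openNbr_inter, openNbr_eq hd]

lemma isBend_iff {d : ℤ × ℤ} (hd : d ∈ unitVecs) {x : ℤ × ℤ} :
    IsBend S x ↔ degS S x = 2 ∧ axisDeg S x d = 1 := by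
  have hx : x + (1, 0) = (x.1 + 1, x.2) ∧ x - (1, 0) = (x.1 - 1, x.2) ∧
      x + (0, 1) = (x.1, x.2 + 1) ∧ x - (0, 1) = (x.1, x.2 - 1) := by
    simp [Prod.ext_iff]
  have hbend : IsBend S x ↔ degS S x = 2 ∧ 0 < axisDeg S x (1, 0) ∧ 0 < axisDeg S x (0, 1) := by
    rw [IsBend, axisDeg_pos_iff, axisDeg_pos_iff, hx.1, hx.2.1, hx.2.2.1, hx.2.2.2]
  have hdeg := degS_eq_axisDeg_add (d := (1, 0)) (by decide) S x
  have hd' : axisDeg S x d = axisDeg S x (1, 0) ∨ axisDeg S x d = axisDeg S x (0, 1) := by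
    fin_cases hd
    · exact .inl rfl
    · exact .inl (axisDeg_neg S x (1, 0))
    · exact .inr rfl
    · exact .inr (axisDeg_neg S x (0, 1))
  rw [hbend]
  rcases hd' with h | h <;> simp only [Prod.swap_prod_mk] at hdeg <;> omega

/- Besides `u + d` and `u`, every neighbour `w` of `u` in direction `±d.swap` makes `w + d` a
cell next to `u + d` that `S.erase (u + d)` still covers. -/
lemma loss_erase_add_axisDeg_le {d : ℤ × ℤ} (hd : d ∈ unitVecs) {u : ℤ × ℤ} (hu : u ∈ S)
    (hv : u + d ∈ S) :
    loss (S.erase (u + d)) + 2 + axisDeg S u d.swap ≤ loss S := by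
  set P := {u + d.swap, u - d.swap} ∩ S
  have hvu : u + d ≠ u := by fin_cases hd <;> simp [Prod.ext_iff]
  have hPS : ∀ w ∈ P, w ∈ S.erase (u + d) := fun w hw => by
    obtain ⟨hw, hwS⟩ := mem_inter.1 hw
    refine mem_erase.2 ⟨?_, hwS⟩
    fin_cases hd <;> simp [Prod.ext_iff] at hw ⊢ <;> omega
  have hT := loss_erase_add_card_le
    (T := insert (u + d) (insert u (P.image (· + d)))) hv ?_ ?_
  · have hu' : u ∉ P.image (· + d) := by
      simp only [P, mem_image, mem_inter]
      fin_cases hd <;> simp [Prod.ext_iff]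
    have hv' : u + d ∉ insert u (P.image (· + d)) := by
      simp only [P, mem_insert, mem_image, mem_inter, hvu, false_or]
      fin_cases hd <;> simp [Prod.ext_iff] <;> omega
    rw [card_insert_of_notMem hv', card_insert_of_notMem hu',
      card_image_of_injective _ (add_left_injective d)] at hT
    have hP : axisDeg S u d.swap = #P := rfl
    omega
  · refine insert_subset (mem_closedNbr_self _) (insert_subset ?_ ?_)
    · fin_cases hd <;> simp [closedNbr, Prod.ext_iff]
    · intro w hw
      simp only [P, mem_image, mem_inter] at hw
      obtain ⟨w, ⟨hw, -⟩, rfl⟩ := hw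
      fin_cases hd <;> simp [closedNbr, Prod.ext_iff] at hw ⊢ <;> omega
  · refine insert_subset ?_ (insert_subset ?_ ?_)
    · exact mem_closedN.2 ⟨u, mem_erase.2 ⟨hvu.symm, hu⟩, by
        fin_cases hd <;> simp [closedNbr, Prod.ext_iff] <;> omega⟩
    · exact mem_closedN.2 ⟨u, mem_erase.2 ⟨hvu.symm, hu⟩, mem_closedNbr_self u⟩
    · intro w hw
      obtain ⟨w, hwP, rfl⟩ := mem_image.1 hw
      exact mem_closedN.2 ⟨w, hPS w hwP, by
        fin_cases hd <;> simp [closedNbr, Prod.ext_iff] <;> omega⟩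

lemma axisDeg_erase_of_notMem {v x d : ℤ × ℤ}
    (h : v ∉ ({x + d, x - d} : Finset (ℤ × ℤ))) : axisDeg (S.erase v) x d = axisDeg S x d := by
  rw [axisDeg, axisDeg, inter_erase, erase_eq_of_notMem
    fun hv => h (mem_of_mem_inter_left hv)]

lemma degS_erase_of_notMem {v x : ℤ × ℤ} (h : v ∉ closedNbr x) :
    degS (S.erase v) x = degS S x := by
  rw [degS_eq_card_openNbr_inter, degS_eq_card_openNbr_inter, inter_erase,
    erase_eq_of_notMem fun hv : v ∈ openNbr x ∩ S =>
      h (mem_of_mem_erase (mem_of_mem_inter_left hv))]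

lemma degS_erase_add_one {v x : ℤ × ℤ} (h : v ∈ openNbr x) (hv : v ∈ S) :
    degS (S.erase v) x + 1 = degS S x := by
  rw [degS_eq_card_openNbr_inter, degS_eq_card_openNbr_inter, inter_erase,
    card_erase_add_one (mem_inter.2 ⟨h, hv⟩)]

lemma isBend_erase_iff {v x : ℤ × ℤ} (h : v ∉ closedNbr x) :
    IsBend (S.erase v) x ↔ IsBend S x := by
  have hd : ((1, 0) : ℤ × ℤ) ∈ unitVecs := by decide
  have hsub : ({x + (1, 0), x - (1, 0)} : Finset (ℤ × ℤ)) ⊆ closedNbr x := by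
    simp [insert_subset_iff, closedNbr, Prod.ext_iff]
  rw [isBend_iff hd, isBend_iff hd, degS_erase_of_notMem h,
    axisDeg_erase_of_notMem fun hv => h (hsub hv)]

def LossBound (S : Finset (ℤ × ℤ)) : Prop :=
  2 * #S + 2 * numLeaves S + numBends S ≤ loss S + 6

lemma notMem_closedNbr_of_leaf {u v x : ℤ × ℤ} (hleaf : openNbr v ∩ S = {u}) (hx : x ∈ S)
    (hxu : x ≠ u) (hxv : x ≠ v) : v ∉ closedNbr x := fun hvx => by
  have hxv' : x ∈ openNbr v ∩ S := mem_inter.2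
    ⟨mem_openNbr_comm.1 ((mem_closedNbr_iff.1 hvx).resolve_left (Ne.symm hxv)), hx⟩
  exact hxu (by simpa [hleaf] using hxv')

/- With `p = axisDeg S u d.swap`, removing the leaf `u + d` lowers `2 * numLeaves + numBends`
by at most `p`, while the loss drops by at least `2 + p`. -/
lemma LossBound.of_erase_leaf {d : ℤ × ℤ} (hd : d ∈ unitVecs) {u : ℤ × ℤ} (hu : u ∈ S)
    (hv : u + d ∈ S) (hleaf : openNbr (u + d) ∩ S = {u}) (hdeg : 2 ≤ degS S u)
    (h : LossBound (S.erase (u + d))) : LossBound S := by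
  have hvu : u + d ∈ openNbr u := by rw [openNbr_eq hd]; simp
  have huv : u ≠ u + d := fun h => by simp [openNbr, ← h] at hvu
  have hleaves := card_filter_add_ite_eq hu hv huv (P := (degS S · = 1))
    (Q := (degS (S.erase (u + d)) · = 1)) fun x hx hxu hxv => by
      rw [degS_erase_of_notMem (notMem_closedNbr_of_leaf hleaf hx hxu hxv)]
  have hbends := card_filter_add_ite_eq hu hv huv (P := IsBend S)
    (Q := IsBend (S.erase (u + d))) fun x hx hxu hxv =>
      (isBend_erase_iff (notMem_closedNbr_of_leaf hleaf hx hxu hxv)).symm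
  have hdegv : degS S (u + d) = 1 := by
    rw [degS_eq_card_openNbr_inter, hleaf, card_singleton]
  have hbendv : ¬IsBend S (u + d) := fun hb => by simpa [hdegv] using hb.1
  have hp : axisDeg (S.erase (u + d)) u d.swap = axisDeg S u d.swap :=
    axisDeg_erase_of_notMem (by fin_cases hd <;> simp [Prod.ext_iff])
  have hbendu : (if IsBend S u then 1 else 0) =
      if degS S u = 2 ∧ axisDeg S u d.swap = 1 then 1 else 0 :=
    if_congr (isBend_iff (swap_mem_unitVecs hd)) rfl rfl
  have hbendu' : (if IsBend (S.erase (u + d)) u then 1 else 0) =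
      if degS (S.erase (u + d)) u = 2 ∧ axisDeg S u d.swap = 1 then 1 else 0 :=
    if_congr (by rw [isBend_iff (swap_mem_unitVecs hd), hp]) rfl rfl
  rw [hbendu, hbendu', if_neg hbendv] at hbends
  rw [hdegv, if_pos rfl] at hleaves
  have hdegu := degS_erase_add_one hvu hv
  have hsplit := degS_eq_axisDeg_add hd S u
  have := axisDeg_le_two S u d
  have hloss := loss_erase_add_axisDeg_le hd hu hv
  have hcard := card_erase_add_one hv
  unfold LossBound numLeaves numBends at *
  split_ifs at hleaves hbends <;> omega

lemma numBends_le_numBends_erase_add {v : ℤ × ℤ} (hv : v ∈ S) :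
    numBends S ≤ numBends (S.erase v) + numLeaves (S.erase v) + 1 := by
  have hsub : {x ∈ S | IsBend S x} ⊆ insert v ({x ∈ S.erase v | IsBend (S.erase v) x} ∪
      {x ∈ S.erase v | degS (S.erase v) x = 1}) := fun x hx => by
    obtain ⟨hxS, hbend⟩ := mem_filter.1 hx
    by_cases hxv : x = v
    · exact mem_insert.2 (.inl hxv)
    have hxS' := mem_erase.2 ⟨hxv, hxS⟩
    refine mem_insert.2 (.inr ?_)
    by_cases hvx : v ∈ closedNbr x
    · have hvx' : v ∈ openNbr x := mem_erase.2 ⟨Ne.symm hxv, hvx⟩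
      have := degS_erase_add_one (S := S) hvx' hv
      have := hbend.1
      exact mem_union_right _ (mem_filter.2 ⟨hxS', by omega⟩)
    · exact mem_union_left _ (mem_filter.2 ⟨hxS', (isBend_erase_iff hvx).2 hbend⟩)
  exact (card_le_card hsub).trans <| (card_insert_le _ _).trans <|
    Nat.add_le_add_right (card_union_le _ _) 1

lemma LossBound.of_erase_of_two_le_degS {v : ℤ × ℤ} (hv : v ∈ S)
    (hdeg : 2 ≤ degS S v) (hleaves : numLeaves S = 0) (h : LossBound (S.erase v)) :
    LossBound S := by
  have := loss_erase_add_degS_le hv (by omega)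
  have := numBends_le_numBends_erase_add hv
  have := card_erase_add_one hv
  unfold LossBound at *
  omega

lemma lossBound_of_card_le_one (hS : #S ≤ 1) : LossBound S := by
  have := card_filter_le S (degS S · = 1)
  have := card_filter_le S (fun x => IsBend S x)
  unfold LossBound numLeaves numBends
  omega

lemma numBends_eq_zero_of_card_le_two (hS : #S ≤ 2) : numBends S = 0 := by
  refine card_eq_zero.2 (filter_eq_empty_iff.2 fun x hx hbend => ?_)
  have hsub : openNbr x ∩ S ⊆ S.erase x := fun w hw =>
    mem_erase.2 ⟨ne_of_mem_erase (mem_of_mem_inter_left hw),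
      mem_of_mem_inter_right hw⟩
  have := card_le_card hsub
  have := card_erase_add_one hx
  have := hbend.1
  rw [degS_eq_card_openNbr_inter] at this
  omega

lemma lossBound_of_card_eq_two {d : ℤ × ℤ} (hd : d ∈ unitVecs) {u : ℤ × ℤ} (hu : u ∈ S)
    (hv : u + d ∈ S) (hS : #S = 2) : LossBound S := by
  have := loss_erase_add_axisDeg_le hd hu hv
  have := card_filter_le S (degS S · = 1)
  unfold LossBound numLeaves
  rw [numBends_eq_zero_of_card_le_two hS.le]
  omega

lemma degS_pos_of_connected (hS : (GridZ.induce (S : Set (ℤ × ℤ))).Connected) (hS2 : 2 ≤ #S)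
    {x : ℤ × ℤ} (hx : x ∈ S) : 0 < degS S x := by
  have : Nontrivial (S : Set (ℤ × ℤ)) :=
    Set.nontrivial_coe_sort.2 (nontrivial_coe.2 (one_lt_card_iff_nontrivial.1 hS2))
  obtain ⟨⟨w, hw⟩, hxw⟩ := hS.preconnected.exists_adj_of_nontrivial ⟨x, hx⟩
  exact card_pos.2 ⟨w, mem_inter.2 ⟨gridZ_adj_iff.1 hxw, hw⟩⟩

lemma connected_erase_of_degS_eq_one (hS : (GridZ.induce (S : Set (ℤ × ℤ))).Connected)
    {v : ℤ × ℤ} (hv : v ∈ S) (hdeg : degS S v = 1) :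
    (GridZ.induce (S.erase v : Set (ℤ × ℤ))).Connected := by
  classical
  obtain ⟨u, hu⟩ := card_eq_one.1 hdeg
  have hnbr : ∀ w ∈ S, GridZ.Adj v w ↔ w = u := fun w hw => by
    rw [gridZ_adj_iff, ← mem_singleton, ← hu, mem_inter, and_iff_left hw]
    rfl
  have huS : u ∈ S := mem_of_mem_inter_right (hu ▸ mem_singleton_self u)
  rw [coe_erase]
  refine SimpleGraph.Connected.induce_diff_singleton hv
    (hS.induce_compl_singleton_of_degree_eq_one
      (SimpleGraph.degree_eq_one_iff_existsUnique_adj.2 ?_))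
  exact ⟨⟨u, huS⟩, (hnbr u huS).2 rfl, fun w hw => Subtype.ext ((hnbr w.1 w.2).1 hw)⟩

lemma exists_connected_erase (hS : (GridZ.induce (S : Set (ℤ × ℤ))).Connected)
    (hS2 : 2 ≤ #S) : ∃ v ∈ S, (GridZ.induce (S.erase v : Set (ℤ × ℤ))).Connected := by
  have : Nontrivial (S : Set (ℤ × ℤ)) :=
    Set.nontrivial_coe_sort.2 (nontrivial_coe.2 (one_lt_card_iff_nontrivial.1 hS2))
  obtain ⟨⟨v, hv⟩, h⟩ := hS.exists_connected_induce_compl_singleton_of_finite_nontrivial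
  exact ⟨v, hv, coe_erase v S ▸ h.induce_diff_singleton hv⟩

theorem lossBound_of_connected (hS : (GridZ.induce (S : Set (ℤ × ℤ))).Connected) :
    LossBound S := by
  induction S using strongInduction with
  | H S ih =>
  rcases le_or_gt #S 1 with hS1 | hS2
  · exact lossBound_of_card_le_one hS1
  by_cases hleaf : ∃ v ∈ S, degS S v = 1
  · obtain ⟨v, hv, hdeg⟩ := hleaf
    obtain ⟨u, hu⟩ := card_eq_one.1 hdeg
    have hu' : u ∈ openNbr v ∩ S := hu ▸ mem_singleton_self u
    obtain ⟨d, hd, rfl⟩ := exists_unitVecs_of_mem_openNbr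
      (mem_openNbr_comm.1 (mem_of_mem_inter_left hu'))
    have huS := mem_of_mem_inter_right hu'
    have hS' := connected_erase_of_degS_eq_one hS hv hdeg
    by_cases hdegu : 2 ≤ degS S u
    · exact .of_erase_leaf hd huS hv hu hdegu (ih _ (erase_ssubset hv) hS')
    · have hvu : u + d ∈ openNbr u := mem_of_mem_inter_left hu' |> mem_openNbr_comm.1
      have := degS_erase_add_one hvu hv
      have := degS_pos_of_connected hS hS2 huS
      have hS'1 : #(S.erase (u + d)) ≤ 1 := by
        by_contra! h
        have := degS_pos_of_connected hS' h (mem_erase.2 ⟨(ne_of_mem_erase hvu).symm, huS⟩)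
        omega
      exact lossBound_of_card_eq_two hd huS hv (by have := card_erase_add_one hv; omega)
  · push Not at hleaf
    obtain ⟨v, hv, hS'⟩ := exists_connected_erase hS hS2
    have := degS_pos_of_connected hS hS2 hv
    refine .of_erase_of_two_le_degS hv (by have := hleaf v hv; omega)
      (card_eq_zero.2 (filter_eq_empty_iff.2 fun x hx => hleaf x hx))
      (ih _ (erase_ssubset hv) hS')

lemma mem_box {n m : ℕ} {p : ℤ × ℤ} :
    p ∈ box n m ↔ 1 ≤ p.1 ∧ p.1 ≤ n ∧ 1 ≤ p.2 ∧ p.2 ≤ m := Iff.rfl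

lemma mem_boundary_of_mem_box {n m : ℕ} {p : ℤ × ℤ} (hp : p ∈ box n m)
    (hedge : p.1 = 1 ∨ p.1 = n ∨ p.2 = 1 ∨ p.2 = m) : p ∈ boundary n m := by
  refine ⟨hp, ?_⟩
  have hout : ∃ w ∈ openNbr p, w ∉ box n m := by
    rw [openNbr_eq (d := (1, 0)) (by decide)]
    rw [mem_box] at hp
    rcases hedge with h | h | h | h
    · exact ⟨p - (1, 0), by simp, by rw [mem_box]; simp; omega⟩
    · exact ⟨p + (1, 0), by simp, by rw [mem_box]; simp; omega⟩
    · exact ⟨p - (0, 1), by simp, by rw [mem_box]; simp; omega⟩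
    · exact ⟨p + (0, 1), by simp, by rw [mem_box]; simp; omega⟩
  have hlt := card_lt_card (filter_ssubset.2 hout)
  rw [openNbr, card_erase_of_mem (mem_closedNbr_self p), card_closedNbr] at hlt
  exact Nat.le_of_lt_succ hlt

lemma four_le_excess {n m : ℕ} (hn : 4 ≤ n) (hm : 4 ≤ m) (hS : IsCDS n m S)
    (hcor : ∀ c ∈ corners n m, c ∉ S) : 4 ≤ excess n m S := by
  set C : Finset (ℤ × ℤ) := ({1, (n : ℤ)} : Finset ℤ) ×ˢ ({1, (m : ℤ)} : Finset ℤ)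
  have hC : ∀ c ∈ C, (c.1 = 1 ∨ c.1 = n) ∧ (c.2 = 1 ∨ c.2 = m) := fun c hc => by
    simpa [C] using hc
  have hdom : ∀ c ∈ C, ∃ u ∈ S, u ∈ boundary n m ∧ GridZ.Adj u c := fun c hc => by
    have hcbox : c ∈ box n m := by
      rw [mem_box]
      have := hC c hc
      omega
    obtain ⟨u, huS, rfl | hadj⟩ := hS.2.2 c hcbox
    · refine absurd huS (hcor u ?_)
      obtain ⟨h1 | h1, h2 | h2⟩ := hC u hc <;> simp [corners, Prod.ext_iff, h1, h2]
    · have hu := hS.1 huS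
      refine ⟨u, huS, mem_boundary_of_mem_box hu ?_, hadj⟩
      rw [mem_box] at hu
      have := gridZ_adj_cases hadj
      have := hC c hc
      omega
  choose! f hfS hfb hfadj using hdom
  -- distinct corners differ by at least `3` in some coordinate, so share no neighbour
  have hinj : Set.InjOn f C := fun c hc c' hc' hcc' => by
    have h := gridZ_adj_cases (hfadj c hc)
    have h' := gridZ_adj_cases (hfadj c' hc')
    rw [hcc'] at h
    have := hC c hc
    have := hC c' hc'
    ext <;> omega
  have hcard : #C = 4 := by
    rw [card_product, card_pair (by omega), card_pair (by omega)]
  calc 4 = #C := hcard.symm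
    _ ≤ excess n m S := card_le_card_of_injOn f
      (fun c hc => mem_filter.2 ⟨hfS c hc, hfb c hc⟩) hinj

end

/-- parametrized bound 1. For a connected dominating set `S` of
`G_{n,m}` with `m, n ≥ 4` and no corner in `S`, `ℓ(S) + e(S) ≥ 2|S| + 2l - 2`. -/
theorem parametrized_bound_one (n m : ℕ) (hn : 4 ≤ n) (hm : 4 ≤ m)
    (S : Finset (ℤ × ℤ)) (hS : IsCDS n m S) (hcor : ∀ c ∈ corners n m, c ∉ S) :
    2 * S.card + 2 * numLeaves S ≤ loss S + excess n m S + 2 := by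
  have hbound : LossBound S := lossBound_of_connected hS.2.1
  have hexcess := four_le_excess hn hm hS hcor
  unfold LossBound at hbound
  omega
end

section
/- For m, n ≥ 4, the set D1 = {(i,2) : 1 ≤ i ≤ n} ∪ {(i,m−1) : 1 ≤ i ≤ n} ∪ {(2,j) : 3 ≤ j ≤ m−2} ∪ {(i, 3k+2) : 3 ≤ i ≤ n, 1 ≤ k ≤ ⌊(m−4)/3⌋} is a connected dominating set of the n × m grid G_{n,m}. -/
/-!
Every piece of `D1` is a straight segment of the grid meeting the segment `{2} × [2, m - 1]`,
so `G[D1]` is a union of connected segments glued to a common connected one.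
For domination, a vertex `(i, j)` with `j ≤ 3` or `j ≥ m - 2` is next to one of the full lines
`j = 2`, `j = m - 1`; one with `i ≤ 2` is next to `(2, j)`; and any other is next to the comb
point `(i, 3 ⌊(j - 1) / 3⌋ + 2)`.
-/

open Finset

/-- Fujie's construction `D1`. -/
noncomputable def D1 (n m : ℕ) : Finset (ℤ × ℤ) :=
  ((Finset.Icc (1 : ℤ) (n : ℤ)).image fun i => (i, (2 : ℤ))) ∪
    ((Finset.Icc (1 : ℤ) (n : ℤ)).image fun i => (i, (m : ℤ) - 1)) ∪
    ((Finset.Icc (3 : ℤ) ((m : ℤ) - 2)).image fun j => ((2 : ℤ), j)) ∪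
    (((Finset.Icc (3 : ℤ) (n : ℤ)) ×ˢ
        (Finset.Icc (1 : ℤ) (((m - 4) / 3 : ℕ) : ℤ))).image fun p => (p.1, 3 * p.2 + 2))

namespace SimpleGraph

variable {V : Type*} (G : SimpleGraph V)

lemma induce_image_Icc_connected (f : ℤ → V) {a b : ℤ} (hab : a ≤ b)
    (hf : ∀ t, a ≤ t → t < b → G.Adj (f t) (f (t + 1))) :
    (G.induce (f '' Set.Icc a b)).Connected := by
  induction b, hab using Int.leInduction with
  | base =>
    rw [Set.Icc_self, Set.image_singleton]
    exact (connected_iff _).2 ⟨.of_subsingleton, ⟨⟨_, rfl⟩⟩⟩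
  | succ b hab ih =>
    have hsplit : f '' Set.Icc a (b + 1) = f '' Set.Icc a b ∪ {f (b + 1)} := by
      rw [← Set.image_singleton, ← Set.image_union]
      congr 1
      ext t
      simp only [Set.mem_Icc, Set.mem_union, Set.mem_singleton_iff]
      omega
    rw [hsplit]
    exact connected_induce_union (ih fun t h₁ h₂ => hf t h₁ (by omega)).preconnected
      (fun _ _ => .of_subsingleton) (Set.mem_image_of_mem f ⟨hab, le_rfl⟩) rfl
      (hf b hab (by omega))

lemma induce_union_sUnion_connected {T : Set V} {F : Set (Set V)}
    (hT : (G.induce T).Connected) (hF : ∀ s ∈ F, (G.induce s).Connected)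
    (hmeet : ∀ s ∈ F, (T ∩ s).Nonempty) :
    (G.induce (T ∪ ⋃₀ F)).Connected := by
  obtain ⟨⟨u, hu⟩⟩ := hT.nonempty
  have hunion : T ∪ ⋃₀ F = ⋃₀ insert T ((T ∪ ·) '' F) := by
    ext v
    simp only [Set.sUnion_insert, Set.sUnion_image, Set.mem_union, Set.mem_iUnion, Set.mem_sUnion]
    grind
  have hsup : ∀ s ∈ insert T ((T ∪ ·) '' F), T ⊆ s := by
    rintro s (rfl | ⟨s, -, rfl⟩)
    exacts [le_rfl, Set.subset_union_left]
  rw [hunion]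
  refine induce_sUnion_connected_of_pairwise_not_disjoint ⟨T, .inl rfl⟩
    (fun hs ht => ⟨u, hsup _ hs hu, hsup _ ht hu⟩) ?_
  rintro s (rfl | ⟨s, hs, rfl⟩)
  exacts [hT, induce_union_connected hT.preconnected (hF s hs).preconnected (hmeet s hs)]

end SimpleGraph

lemma gridZ_adj_snd_add_one (i j : ℤ) : GridZ.Adj (i, j) (i, j + 1) := by
  change |i - i| + |j - (j + 1)| = 1
  norm_num

lemma gridZ_adj_fst_add_one (i j : ℤ) : GridZ.Adj (i, j) (i + 1, j) := by
  change |i - (i + 1)| + |j - j| = 1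
  norm_num

lemma eq_or_gridZ_adj_of_dist_le_one {u v : ℤ × ℤ} (h : |u.1 - v.1| + |u.2 - v.2| ≤ 1) :
    u = v ∨ GridZ.Adj u v := by
  rcases h.lt_or_eq with h | h
  · simp only [Int.abs_eq_natAbs] at h
    exact .inl (Prod.ext (by omega) (by omega))
  · exact .inr h

def hSeg (i a b : ℤ) : Set (ℤ × ℤ) := Prod.mk i '' Set.Icc a b

def vSeg (j a b : ℤ) : Set (ℤ × ℤ) := (fun i => (i, j)) '' Set.Icc a b

lemma mem_hSeg {i a b : ℤ} {p : ℤ × ℤ} : p ∈ hSeg i a b ↔ p.1 = i ∧ a ≤ p.2 ∧ p.2 ≤ b := by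
  obtain ⟨x, y⟩ := p
  simp only [hSeg, Set.mem_image, Set.mem_Icc, Prod.mk.injEq, eq_comm, exists_eq_right_right']
  tauto

lemma mem_vSeg {j a b : ℤ} {p : ℤ × ℤ} : p ∈ vSeg j a b ↔ p.2 = j ∧ a ≤ p.1 ∧ p.1 ≤ b := by
  obtain ⟨x, y⟩ := p
  simp only [vSeg, Set.mem_image, Set.mem_Icc, eq_comm, Prod.mk.injEq, ↓existsAndEq, true_and]
  tauto

lemma hSeg_connected {i a b : ℤ} (hab : a ≤ b) : (GridZ.induce (hSeg i a b)).Connected :=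
  GridZ.induce_image_Icc_connected _ hab fun t _ _ => gridZ_adj_snd_add_one i t

lemma vSeg_connected {j a b : ℤ} (hab : a ≤ b) : (GridZ.induce (vSeg j a b)).Connected :=
  GridZ.induce_image_Icc_connected _ hab fun t _ _ => gridZ_adj_fst_add_one t j

lemma mem_D1 {n m : ℕ} {i j : ℤ} : (i, j) ∈ D1 n m ↔
    (1 ≤ i ∧ i ≤ n ∧ j = 2) ∨ (1 ≤ i ∧ i ≤ n ∧ j = m - 1) ∨ (i = 2 ∧ 3 ≤ j ∧ j ≤ m - 2) ∨
      (3 ≤ i ∧ i ≤ n ∧ ∃ k : ℤ, 1 ≤ k ∧ k ≤ ((m - 4) / 3 : ℕ) ∧ j = 3 * k + 2) := by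
  simp only [D1, union_assoc, Int.natCast_ediv, Nat.cast_ofNat, mem_union, mem_image, mem_Icc,
    eq_comm, Prod.ext_iff, and_assoc, ↓existsAndEq, true_and, and_true, mem_product, Prod.exists,
    exists_and_left]
  tauto

lemma D1_subset_box {n m : ℕ} (hn : 2 ≤ n) (hm : 2 ≤ m) : (D1 n m : Set (ℤ × ℤ)) ⊆ box n m := by
  rintro ⟨i, j⟩ h
  rw [Finset.mem_coe, mem_D1] at h
  change 1 ≤ i ∧ i ≤ n ∧ 1 ≤ j ∧ j ≤ m
  obtain h | h | h | ⟨_, _, k, _, _, rfl⟩ := h <;> omega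

lemma D1_dominates {n m : ℕ} (hm : 4 ≤ m) :
    ∀ v ∈ box n m, ∃ u ∈ D1 n m, u = v ∨ GridZ.Adj u v := by
  rintro ⟨i, j⟩ ⟨hi₁, hin, hj₁, hjm⟩
  suffices ∃ a b, (a, b) ∈ D1 n m ∧ |a - i| + |b - j| ≤ 1 by
    obtain ⟨a, b, hab, hdist⟩ := this
    exact ⟨(a, b), hab, eq_or_gridZ_adj_of_dist_le_one hdist⟩
  simp only [mem_D1, Int.abs_eq_natAbs]
  by_cases hj3 : j ≤ 3
  · exact ⟨i, 2, by omega, by omega⟩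
  by_cases hjm2 : m - 2 ≤ j
  · exact ⟨i, m - 1, by omega, by omega⟩
  by_cases hi2 : i ≤ 2
  · exact ⟨2, j, by omega, by omega⟩
  exact ⟨i, 3 * ((j - 1) / 3) + 2,
    .inr (.inr (.inr ⟨by omega, hin, (j - 1) / 3, by omega, by omega, rfl⟩)), by omega⟩

lemma coe_D1_eq {n m : ℕ} (hn : 2 ≤ n) (hm : 4 ≤ m) :
    (D1 n m : Set (ℤ × ℤ)) = hSeg 2 2 (m - 1) ∪
      ⋃₀ insert (vSeg 2 1 n) (insert (vSeg (m - 1) 1 n)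
        ((fun k => vSeg (3 * k + 2) 2 n) '' Set.Icc 1 ((m - 4) / 3 : ℕ))) := by
  ext ⟨i, j⟩
  simp only [Finset.mem_coe, mem_D1, Set.mem_union, Set.sUnion_insert, Set.sUnion_image,
    Set.mem_iUnion, mem_hSeg, mem_vSeg, Set.mem_Icc, exists_prop]
  constructor
  · rintro (h | h | h | ⟨hi₃, hin, k, hk₁, hk₂, rfl⟩)
    · exact .inr (.inl ⟨h.2.2, h.1, h.2.1⟩)
    · exact .inr (.inr (.inl ⟨h.2.2, h.1, h.2.1⟩))
    · exact .inl ⟨h.1, by omega, by omega⟩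
    · exact .inr (.inr (.inr ⟨k, ⟨hk₁, hk₂⟩, rfl, by omega, hin⟩))
  · rintro (⟨rfl, hj⟩ | h | h | ⟨k, ⟨hk₁, hk₂⟩, rfl, hi₂, hin⟩)
    · omega
    · exact .inl ⟨h.2.1, h.2.2, h.1⟩
    · exact .inr (.inl ⟨h.2.1, h.2.2, h.1⟩)
    · obtain rfl | hi₂ := hi₂.eq_or_lt
      · exact .inr (.inr (.inl ⟨rfl, by omega, by omega⟩))
      · exact .inr (.inr (.inr ⟨hi₂, hin, k, hk₁, hk₂, rfl⟩))

lemma D1_connected {n m : ℕ} (hn : 2 ≤ n) (hm : 4 ≤ m) :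
    (GridZ.induce (D1 n m : Set (ℤ × ℤ))).Connected := by
  rw [coe_D1_eq hn hm]
  refine GridZ.induce_union_sUnion_connected (hSeg_connected (by omega)) ?_ ?_
  · rintro s (rfl | rfl | ⟨k, -, rfl⟩) <;> exact vSeg_connected (by omega)
  · rintro s (rfl | rfl | ⟨k, hk, rfl⟩)
    · exact ⟨(2, 2), mem_hSeg.2 ⟨rfl, by omega⟩, mem_vSeg.2 ⟨rfl, by omega⟩⟩
    · exact ⟨(2, m - 1), mem_hSeg.2 ⟨rfl, by omega⟩, mem_vSeg.2 ⟨rfl, by omega⟩⟩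
    · rw [Set.mem_Icc] at hk
      exact ⟨(2, 3 * k + 2), mem_hSeg.2 ⟨rfl, by omega⟩, mem_vSeg.2 ⟨rfl, by omega⟩⟩

/-- For `m, n ≥ 4`, Fujie's construction `D1` is a connected
dominating set of `G_{n,m}`. -/
theorem D1_isCDS (n m : ℕ) (hn : 4 ≤ n) (hm : 4 ≤ m) : IsCDS n m (D1 n m) :=
  ⟨D1_subset_box (by omega) (by omega), D1_connected (by omega) hm, D1_dominates hm⟩
end

section
/- For m, n ≥ 4, γ_c(G_{n,m}) ≤ min{ 2n + (m−4) + ⌊(m−4)/3⌋·(n−2), 2m + (n−4) + ⌊(n−4)/3⌋·(m−2) }. -/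
open Finset

/-!
Fujie's set `D₁` is a comb: two full columns joined by a row, with a vertical tooth in every
third column in between. Every column lies within distance one of a full column or a tooth, and
the first three rows are covered by the joining row, so `D₁` dominates; it is connected since each
of its columns meets the joining row. `D₂` is the transpose of the comb for `G_{m,n}`.
-/

namespace SimpleGraph

variable {V W : Type*} {G : SimpleGraph V} {H : SimpleGraph W}

theorem connected_induce_image_Icc {f : ℤ → V} (hf : ∀ k, G.Adj (f k) (f (k + 1))) {a b : ℤ}
    (hab : a ≤ b) : (G.induce (f '' Set.Icc a b)).Connected := by
  induction b, hab using Int.leInduction with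
  | base =>
    rw [Set.Icc_self, Set.image_singleton]
    exact Connected.of_subsingleton
  | succ b hab ih =>
    rw [← Set.insert_Icc_right_eq_Icc_add_one (by omega), Set.image_insert_eq, Set.insert_eq,
      Set.union_comm]
    exact connected_induce_union ih.preconnected Preconnected.of_subsingleton
      (Set.mem_image_of_mem f ⟨hab, le_rfl⟩) rfl (hf b)

theorem Iso.connected_induce_image (e : G ≃g H) {s : Set V} (hs : (G.induce s).Connected) :
    (H.induce (e '' s)).Connected :=
  hs.map (induceHom e.toHom (Set.mapsTo_image e s)) <| by
    rintro ⟨_, x, hx, rfl⟩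
    exact ⟨⟨x, hx⟩, rfl⟩

end SimpleGraph

lemma gridZ_adj_iff_of_fst_eq (i c j : ℤ) : GridZ.Adj (i, c) (i, j) ↔ |c - j| = 1 := by
  simp [GridZ]

lemma gridZ_adj_iff_of_snd_eq (r i j : ℤ) : GridZ.Adj (r, j) (i, j) ↔ |r - i| = 1 := by
  simp [GridZ]

lemma eq_or_gridZ_adj_of_fst_eq {i c j : ℤ} (h₁ : j - 1 ≤ c) (h₂ : c ≤ j + 1) :
    (i, c) = (i, j) ∨ GridZ.Adj (i, c) (i, j) := by
  rw [gridZ_adj_iff_of_fst_eq, abs_eq zero_le_one, Prod.ext_iff]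
  omega

lemma eq_or_gridZ_adj_of_snd_eq {r i j : ℤ} (h₁ : i - 1 ≤ r) (h₂ : r ≤ i + 1) :
    (r, j) = (i, j) ∨ GridZ.Adj (r, j) (i, j) := by
  rw [gridZ_adj_iff_of_snd_eq, abs_eq zero_le_one, Prod.ext_iff]
  omega

lemma connected_induce_gridZ_row (i : ℤ) {a b : ℤ} (hab : a ≤ b) :
    (GridZ.induce ({i} ×ˢ Set.Icc a b)).Connected := by
  rw [Set.singleton_prod]
  exact SimpleGraph.connected_induce_image_Icc (fun k => by simp [GridZ]) hab

lemma connected_induce_gridZ_col (j : ℤ) {a b : ℤ} (hab : a ≤ b) :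
    (GridZ.induce (Set.Icc a b ×ˢ {j})).Connected := by
  rw [Set.prod_singleton]
  exact SimpleGraph.connected_induce_image_Icc (fun k => by simp [GridZ]) hab

lemma connected_induce_gridZ_row_union_col {r a b c₁ c₂ c : ℤ} (ha : a ≤ r) (hb : r ≤ b)
    (hc₁ : c₁ ≤ c) (hc₂ : c ≤ c₂) :
    (GridZ.induce ({r} ×ˢ Set.Icc c₁ c₂ ∪ Set.Icc a b ×ˢ {c})).Connected :=
  SimpleGraph.induce_union_connected (connected_induce_gridZ_row r (hc₁.trans hc₂)).preconnected
    (connected_induce_gridZ_col c (ha.trans hb)).preconnected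
    ⟨(r, c), ⟨rfl, hc₁, hc₂⟩, ⟨ha, hb⟩, rfl⟩

def gridZSwap : GridZ ≃g GridZ where
  toEquiv := Equiv.prodComm ℤ ℤ
  map_rel_iff' := by simp [GridZ, add_comm]

@[simp]
lemma gridZSwap_apply (p : ℤ × ℤ) : gridZSwap p = p.swap := rfl

lemma swap_mem_box {n m : ℕ} {p : ℤ × ℤ} : p.swap ∈ box m n ↔ p ∈ box n m := by
  simp only [_root_.box, Set.mem_ofPred_eq, Prod.fst_swap, Prod.snd_swap]
  tauto

/-- Fujie's set `D₁`: columns `2` and `m - 1`, row `2` between them, and the teeth: the columns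
`5, 8, …` up to `m - 2`, from row `3` down. -/
noncomputable def comb (n m : ℕ) : Finset (ℤ × ℤ) :=
  Icc 1 (n : ℤ) ×ˢ {2, (m : ℤ) - 1} ∪ {2} ×ˢ Icc 3 ((m : ℤ) - 2) ∪
    Icc 3 (n : ℤ) ×ˢ (Icc 1 (((m : ℤ) - 4) / 3)).image (3 * · + 2)

section comb

variable {n m : ℕ}

lemma mem_comb {p : ℤ × ℤ} : p ∈ comb n m ↔
    (1 ≤ p.1 ∧ p.1 ≤ n ∧ (p.2 = 2 ∨ p.2 = m - 1)) ∨ (p.1 = 2 ∧ 3 ≤ p.2 ∧ p.2 ≤ m - 2) ∨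
      (3 ≤ p.1 ∧ p.1 ≤ n ∧ 5 ≤ p.2 ∧ p.2 ≤ m - 2 ∧ p.2 % 3 = 2) := by
  have tooth : ∀ c : ℤ, (∃ k, (1 ≤ k ∧ k ≤ ((m : ℤ) - 4) / 3) ∧ 3 * k + 2 = c) ↔
      5 ≤ c ∧ c ≤ m - 2 ∧ c % 3 = 2 :=
    fun c => ⟨by omega, fun _ => ⟨c / 3, by omega, by omega⟩⟩
  simp only [comb, mem_union, mem_product, mem_Icc, mem_insert, mem_singleton, mem_image, tooth]
  omega

lemma card_comb_le : #(comb n m) ≤ 2 * n + (m - 4) + (m - 4) / 3 * (n - 2) := by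
  have hteeth : #((Icc 1 (((m : ℤ) - 4) / 3)).image (3 * · + 2)) ≤ (m - 4) / 3 :=
    card_image_le.trans (by rw [Int.card_Icc]; omega)
  calc #(comb n m)
      ≤ #(Icc 1 (n : ℤ)) * 2 + #(Icc 3 ((m : ℤ) - 2)) + #(Icc 3 (n : ℤ)) * ((m - 4) / 3) := by
        refine (card_union_le _ _).trans (add_le_add ((card_union_le _ _).trans ?_) ?_)
        · rw [card_product, card_product, card_singleton, one_mul]
          gcongr
          exact card_le_two
        · rw [card_product]
          gcongr
    _ = 2 * n + (m - 4) + (m - 4) / 3 * (n - 2) := by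
        simp only [Int.card_Icc]
        rw [mul_comm ((m - 4) / 3)]
        congr 2 <;> omega

lemma comb_subset_box (hn : 2 ≤ n) (hm : 2 ≤ m) : (comb n m : Set (ℤ × ℤ)) ⊆ box n m := by
  rintro ⟨i, j⟩ hp
  rw [mem_coe, mem_comb] at hp
  simp only [_root_.box, Set.mem_ofPred_eq]
  omega

lemma comb_dominates (v : ℤ × ℤ) (hv : v ∈ box n m) :
    ∃ u ∈ comb n m, u = v ∨ GridZ.Adj u v := by
  obtain ⟨i, j⟩ := v
  obtain ⟨hi₁, hin, hj₁, hjm⟩ := hv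
  by_cases hj3 : j ≤ 3
  · exact ⟨(i, 2), mem_comb.2 (by omega), eq_or_gridZ_adj_of_fst_eq (by omega) (by omega)⟩
  by_cases hjm2 : (m : ℤ) - 2 ≤ j
  · exact ⟨(i, m - 1), mem_comb.2 (by omega), eq_or_gridZ_adj_of_fst_eq (by omega) (by omega)⟩
  by_cases hi3 : i ≤ 3
  · exact ⟨(2, j), mem_comb.2 (by omega), eq_or_gridZ_adj_of_snd_eq (by omega) (by omega)⟩
  · exact ⟨(i, 3 * ((j - 1) / 3) + 2), mem_comb.2 (by omega),
      eq_or_gridZ_adj_of_fst_eq (by omega) (by omega)⟩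

lemma exists_col_subset_comb (hn : 2 ≤ n) (hm : 3 ≤ m) {v : ℤ × ℤ} (hv : v ∈ comb n m) :
    ∃ a b c : ℤ, a ≤ 2 ∧ 2 ≤ b ∧ 2 ≤ c ∧ c ≤ m - 1 ∧ v ∈ Set.Icc a b ×ˢ {c} ∧
      Set.Icc a b ×ˢ {c} ⊆ (comb n m : Set (ℤ × ℤ)) := by
  obtain ⟨i, j⟩ := v
  rw [mem_comb] at hv
  have key : ∃ a b : ℤ, a ≤ 2 ∧ 2 ≤ b ∧ 2 ≤ j ∧ j ≤ m - 1 ∧ a ≤ i ∧ i ≤ b ∧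
      ∀ x, a ≤ x → x ≤ b → (x, j) ∈ comb n m := by
    rcases hv with ⟨hi₁, hin, hj⟩ | ⟨rfl, hj₁, hj₂⟩ | ⟨hi₃, hin, hj₁, hj₂, hj₃⟩
    · exact ⟨1, n, by omega, by omega, by omega, by omega, by omega, by omega,
        fun x _ _ => mem_comb.2 (by omega)⟩
    · exact ⟨2, 2, le_rfl, le_rfl, by omega, by omega, le_rfl, le_rfl,
        fun x _ _ => mem_comb.2 (by omega)⟩
    · exact ⟨2, n, le_rfl, by omega, by omega, by omega, by omega, by omega,
        fun x _ _ => mem_comb.2 (by omega)⟩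
  obtain ⟨a, b, ha, hb, hj₁, hj₂, hai, hib, hcol⟩ := key
  exact ⟨a, b, j, ha, hb, hj₁, hj₂, ⟨⟨hai, hib⟩, rfl⟩,
    fun ⟨x, y⟩ ⟨⟨hax, hxb⟩, (hy : y = j)⟩ => hy ▸ hcol x hax hxb⟩

lemma connected_induce_comb (hn : 2 ≤ n) (hm : 3 ≤ m) :
    (GridZ.induce (comb n m : Set (ℤ × ℤ))).Connected := by
  have hrow : {2} ×ˢ Set.Icc 2 ((m : ℤ) - 1) ⊆ (comb n m : Set (ℤ × ℤ)) := by
    rintro ⟨i, j⟩ ⟨(hi : i = 2), hj₁, hj₂⟩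
    exact mem_comb.2 (by omega)
  refine SimpleGraph.induce_connected_of_patches (2, 2) (hrow ⟨rfl, le_rfl, by omega⟩)
    fun {v} hv => ?_
  obtain ⟨a, b, c, ha, hb, hc₁, hc₂, hv, hcol⟩ := exists_col_subset_comb hn hm (mem_coe.1 hv)
  exact ⟨_, Set.union_subset hrow hcol, Or.inl ⟨rfl, le_rfl, by omega⟩, Or.inr hv,
    (connected_induce_gridZ_row_union_col ha hb hc₁ hc₂).preconnected _ _⟩

lemma isCDS_comb (hn : 2 ≤ n) (hm : 3 ≤ m) : IsCDS n m (comb n m) :=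
  ⟨comb_subset_box hn (by omega), connected_induce_comb hn hm, comb_dominates⟩

end comb

lemma IsCDS.map_swap {n m : ℕ} {S : Finset (ℤ × ℤ)} (h : IsCDS n m S) :
    IsCDS m n (S.map (Equiv.prodComm ℤ ℤ).toEmbedding) := by
  obtain ⟨hbox, hconn, hdom⟩ := h
  refine ⟨?_, ?_, fun v hv => ?_⟩
  · rw [coe_map]
    rintro _ ⟨q, hq, rfl⟩
    exact swap_mem_box.2 (hbox hq)
  · rw [coe_map]
    exact gridZSwap.connected_induce_image hconn
  · obtain ⟨u, hu, huv⟩ := hdom v.swap (swap_mem_box.1 (by rwa [Prod.swap_swap]))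
    refine ⟨u.swap, mem_map_equiv.2 (by simpa using hu), ?_⟩
    rcases huv with rfl | huv
    · exact Or.inl (Prod.swap_swap v)
    · exact Or.inr (by simpa using gridZSwap.map_adj_iff.2 huv)

lemma IsCDS.connDomNum_le_card {n m : ℕ} {S : Finset (ℤ × ℤ)} (h : IsCDS n m S) :
    connDomNum n m ≤ #S :=
  Nat.sInf_le ⟨S, h, rfl⟩

/-- For `m, n ≥ 4`,
`γ_c(G_{n,m}) ≤ min{2n + (m-4) + ⌊(m-4)/3⌋(n-2), 2m + (n-4) + ⌊(n-4)/3⌋(m-2)}`. -/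
theorem connDomNum_upper_bound (n m : ℕ) (hn : 4 ≤ n) (hm : 4 ≤ m) :
    connDomNum n m ≤
      min (2 * n + (m - 4) + ((m - 4) / 3) * (n - 2))
        (2 * m + (n - 4) + ((n - 4) / 3) * (m - 2)) := by
  refine le_min ?_ ?_
  · exact (isCDS_comb (by omega) (by omega)).connDomNum_le_card.trans card_comb_le
  · exact (isCDS_comb (by omega) (by omega)).map_swap.connDomNum_le_card.trans
      ((card_map _).trans_le card_comb_le)
end
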